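/- arXiv:2506.17905 — 2 statements merged into one kernel-verified Lean document; each statement's English description precedes it below -/
import Mathlib

section
/- Let 𝒬 be a stopping collection with top Q in a dyadic lattice of ℝ^n, let 1 ≤ q ≤ p < ∞ and λ > 1. Let f ∈ Ẋ_q(𝒬) with ‖f‖_{Ẋ_q} ≤ 1, write f_{>λ} = f·1_{|f|>λ}, and define b = Σ_{L∈𝒬} (f_{>λ} − |L|^{−1}∫_L f_{>λ}) 1_L and g = f − b. Then ‖b‖_{Ẋ_1(𝒬)} ≲ λ^{1−q} and ‖g‖_{𝒴_p(𝒬)} ≲ λ^{1−q/p}, with implicit constants depending only on n, q, p. -/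
open MeasureTheory Filter Set
open scoped ENNReal NNReal BigOperators FourierTransform

noncomputable section

/-- View a vector in the Pi type `Fin n → ℝ` as an element of Euclidean space. -/
def toE {n : ℕ} (x : Fin n → ℝ) : EuclideanSpace ℝ (Fin n) :=
  (WithLp.equiv 2 (Fin n → ℝ)).symm x

/-- The Euclidean norm of a vector in `Fin n → ℝ`. -/
def eunorm {n : ℕ} (x : Fin n → ℝ) : ℝ := ‖toE x‖

/-- An axis-parallel (half-open) cube in `ℝⁿ`, given by its center and (positive) side length. -/
structure Cube (n : ℕ) where
  center : Fin n → ℝ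
  side : ℝ
  side_pos : 0 < side

namespace Cube

/-- The set of points of a cube. -/
def toSet {n : ℕ} (Q : Cube n) : Set (Fin n → ℝ) :=
  {x | ∀ i, Q.center i - Q.side / 2 ≤ x i ∧ x i < Q.center i + Q.side / 2}

/-- The `lam`-fold dilate of a cube (same center, `lam` times the side length). -/
def dilate {n : ℕ} (Q : Cube n) (lam : ℝ) (h : 0 < lam) : Cube n :=
  ⟨Q.center, lam * Q.side, mul_pos h Q.side_pos⟩

end Cube

/-- `(|Q|⁻¹ ∫_Q ‖f‖^q)^(1/q)`, the `L^q` average of `f` over `Q`, valued in `ℝ≥0∞`. -/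
def cubeAvg {n : ℕ} (q : ℝ) (Q : Set (Fin n → ℝ)) {E : Type*} [NormedAddCommGroup E]
    (f : (Fin n → ℝ) → E) : ℝ≥0∞ :=
  ((volume Q)⁻¹ * ∫⁻ x in Q, (‖f x‖₊ : ℝ≥0∞) ^ q) ^ (1 / q)

/-- An `η`-sparse family of cubes. -/
def IsSparseFamily {n : ℕ} (η : ℝ) (S : Set (Cube n)) : Prop :=
  ∃ E : Cube n → Set (Fin n → ℝ),
    (∀ Q ∈ S, E Q ⊆ Q.toSet ∧ MeasurableSet (E Q) ∧
      ENNReal.ofReal η * volume Q.toSet ≤ volume (E Q)) ∧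
    S.Pairwise fun Q Q' => Disjoint (E Q) (E Q')

/-- The positive sparse form `PSF_{S;q₁,…,q_m}(f₁,…,f_m) = ∑_{Q∈S} |Q| ∏ᵢ ⟨fᵢ⟩_{qᵢ,Q}`. -/
def PSF {n m : ℕ} (S : Set (Cube n)) (q : Fin m → ℝ) {E : Type*} [NormedAddCommGroup E]
    (f : Fin m → (Fin n → ℝ) → E) : ℝ≥0∞ :=
  ∑' Q : S, volume (Q : Cube n).toSet * ∏ i, cubeAvg (q i) (Q : Cube n).toSet (f i)

/-- Surface measure on the unit sphere `𝕊^{d-1} ⊆ ℝ^d`, realized as a measure on `ℝ^d`: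
`σ(A) = d · |{x : ‖x‖ ≤ 1, x ≠ 0, x/‖x‖ ∈ A}|`. -/
def sphereMeasure (d : ℕ) : Measure (EuclideanSpace ℝ (Fin d)) :=
  (d : ℝ≥0∞) • Measure.map (fun x => ‖x‖⁻¹ • x) (volume.restrict {x | ‖x‖ ≤ 1 ∧ x ≠ 0})

/-- The rough kernel `K(x) = Ω(x/|x|)|x|^{-mn}` on `ℝ^{mn}`. -/
def roughKernel (m n : ℕ) (Ω : EuclideanSpace ℝ (Fin (m * n)) → ℝ)
    (x : EuclideanSpace ℝ (Fin (m * n))) : ℝ :=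
  Ω (‖x‖⁻¹ • x) * ‖x‖ ^ (-(m * n : ℝ))

/-- Pack an `m`-tuple of vectors in `ℝⁿ` into a single vector in `ℝ^{mn}`. -/
def pack (m n : ℕ) (v : Fin m → Fin n → ℝ) : EuclideanSpace ℝ (Fin (m * n)) :=
  (WithLp.equiv 2 (Fin (m * n) → ℝ)).symm fun k =>
    v (finProdFinEquiv.symm k).1 (finProdFinEquiv.symm k).2

/-- The rough multilinear singular integral `𝒯_Ω`, defined as a principal value. -/
def TOmega (m n : ℕ) (Ω : EuclideanSpace ℝ (Fin (m * n)) → ℝ)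
    (f : Fin m → (Fin n → ℝ) → ℝ) (x : Fin n → ℝ) : ℝ :=
  limUnder (nhdsWithin 0 (Set.Ioi (0 : ℝ))) fun ε =>
    ∫ y : Fin m → Fin n → ℝ in {y | ∀ i, ε < eunorm (x - y i)},
      roughKernel m n Ω (pack m n fun i => x - y i) * ∏ i, f i (y i)

/-- The commutator `[𝒯_Ω, 𝐛]_α` of the rough multilinear singular integral with BMO symbols. -/
def TOmegaComm (m n : ℕ) (Ω : EuclideanSpace ℝ (Fin (m * n)) → ℝ)
    (b : Fin m → (Fin n → ℝ) → ℝ) (α : Fin m → ℕ)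
    (f : Fin m → (Fin n → ℝ) → ℝ) (x : Fin n → ℝ) : ℝ :=
  limUnder (nhdsWithin 0 (Set.Ioi (0 : ℝ))) fun ε =>
    ∫ y : Fin m → Fin n → ℝ in {y | ∀ i, ε < eunorm (x - y i)},
      roughKernel m n Ω (pack m n fun i => x - y i) *
        (∏ i, (b i x - b i (y i)) ^ α i) * ∏ i, f i (y i)

/-- Weighted `L^t` norm: `‖f‖_{L^t(w)} = (∫ |f|^t w)^{1/t}`, valued in `ℝ≥0∞`. -/
def wnorm {n : ℕ} (t : ℝ) (w : (Fin n → ℝ) → ℝ) (f : (Fin n → ℝ) → ℝ) : ℝ≥0∞ :=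
  (∫⁻ x, (‖f x‖₊ : ℝ≥0∞) ^ t * ENNReal.ofReal (w x)) ^ (1 / t)

/-- The condition `(1/p₁,…,1/p_m) ∈ ℋ^m(r)`:
for every `α ∈ {0,1}^m`, `1/p_α + (|α|-1)/r < |α|`. -/
def memH (m : ℕ) (r : ℝ) (p : Fin m → ℝ) : Prop :=
  ∀ S : Finset (Fin m), (∑ i ∈ S, (p i)⁻¹) + ((S.card : ℝ) - 1) / r < S.card

/-- The average `|Q|⁻¹ ∫_Q g` of a real function over a cube. -/
def avgI {n : ℕ} (Q : Cube n) (g : (Fin n → ℝ) → ℝ) : ℝ :=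
  ((volume Q.toSet).toReal)⁻¹ * ∫ x in Q.toSet, g x

/-- The `A_{𝐩,𝐫}` quantity of a weight vector on a fixed cube `Q`. -/
def AprQ {n m : ℕ} (p : Fin m → ℝ) (r : Fin (m + 1) → ℝ)
    (w : Fin m → (Fin n → ℝ) → ℝ) (Q : Cube n) : ℝ :=
  (avgI Q fun x => (∏ i, w i x ^ ((∑ j, (p j)⁻¹)⁻¹ / p i)) ^
      ((r (Fin.last m) / (r (Fin.last m) - 1)) /
        (r (Fin.last m) / (r (Fin.last m) - 1) - (∑ j, (p j)⁻¹)⁻¹))) ^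
      ((∑ j, (p j)⁻¹) - (r (Fin.last m) / (r (Fin.last m) - 1))⁻¹) *
    ∏ i, (avgI Q fun x => w i x ^ (-(p i / r i.castSucc - 1)⁻¹)) ^
      ((r i.castSucc)⁻¹ - (p i)⁻¹)

/-- Membership in the multilinear weight class `A_{𝐩,𝐫}`. -/
def MemApr {n m : ℕ} (p : Fin m → ℝ) (r : Fin (m + 1) → ℝ)
    (w : Fin m → (Fin n → ℝ) → ℝ) : Prop :=
  (∀ i x, 0 < w i x) ∧ (∀ i, LocallyIntegrable (w i) volume) ∧
    BddAbove (Set.range (AprQ p r w))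

/-- The `A_{𝐩,𝐫}` characteristic `[𝐰]_{A_{𝐩,𝐫}}` (supremum over all cubes). -/
def AprConst {n m : ℕ} (p : Fin m → ℝ) (r : Fin (m + 1) → ℝ)
    (w : Fin m → (Fin n → ℝ) → ℝ) : ℝ :=
  ⨆ Q : Cube n, AprQ p r w Q

/-- Membership in the Muckenhoupt class `A_t`. -/
def MemAp {n : ℕ} (t : ℝ) (w : (Fin n → ℝ) → ℝ) : Prop :=
  (∀ x, 0 ≤ w x) ∧ LocallyIntegrable w volume ∧
    ∃ C : ℝ, ∀ Q : Cube n,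
      avgI Q w * (avgI Q fun x => w x ^ (1 / (1 - t))) ^ (t - 1) ≤ C

/-- The BMO oscillation of `b` on a cube `Q`. -/
def bmoQ {n : ℕ} (b : (Fin n → ℝ) → ℝ) (Q : Cube n) : ℝ :=
  avgI Q fun x => |b x - avgI Q b|

/-- Membership in BMO. -/
def MemBMO {n : ℕ} (b : (Fin n → ℝ) → ℝ) : Prop :=
  LocallyIntegrable b volume ∧ BddAbove (Set.range (bmoQ b))

/-- The BMO norm. -/
def bmoNorm {n : ℕ} (b : (Fin n → ℝ) → ℝ) : ℝ :=
  ⨆ Q : Cube n, bmoQ b Q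

/-- A dyadic lattice of cubes in `ℝⁿ` (a translate of the standard dyadic grid). -/
def IsDyadicLattice {n : ℕ} (D : Set (Cube n)) : Prop :=
  ∃ c : Fin n → ℝ, D = {Q : Cube n | ∃ (k : ℤ) (a : Fin n → ℤ),
    Q.side = 2 ^ k ∧ ∀ i, Q.center i = c i + ((a i : ℝ) + 1 / 2) * 2 ^ k}

/-- The shadow `sh𝒬 = ⋃_{L ∈ 𝒬} L` of a collection of cubes. -/
def shadow {n : ℕ} (Qc : Set (Cube n)) : Set (Fin n → ℝ) :=
  ⋃ L ∈ Qc, L.toSet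

/-- A stopping collection `𝒬` with top cube `Q` inside the dyadic lattice `D`. -/
def IsStoppingCollection {n : ℕ} (D : Set (Cube n)) (Qtop : Cube n)
    (Qc : Set (Cube n)) : Prop :=
  Qtop ∈ D ∧ Qc ⊆ D ∧
    (∀ L ∈ Qc, ∀ L' ∈ Qc, (Cube.toSet L ∩ Cube.toSet L').Nonempty → L = L') ∧
    (∀ L ∈ Qc, Cube.toSet L ⊆ (Qtop.dilate 3 (by norm_num)).toSet) ∧
    (∀ L ∈ Qc, ∀ L' ∈ Qc, 8 ≤ |Real.logb 2 L.side - Real.logb 2 L'.side| →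
      Disjoint (L.dilate 7 (by norm_num)).toSet (L'.dilate 7 (by norm_num)).toSet) ∧
    (⋃ L ∈ {L ∈ Qc | ((L.dilate 3 (by norm_num)).toSet ∩
        (Qtop.dilate 2 (by norm_num)).toSet).Nonempty},
      (Cube.dilate L 9 (by norm_num)).toSet) ⊆ shadow Qc

/-- The maximal function `M_t h(x) = sup_{Q ∋ x} ⟨h⟩_{t,Q}`, valued in `ℝ≥0∞`. -/
def maxFn {n : ℕ} (t : ℝ) {E : Type*} [NormedAddCommGroup E]
    (h : (Fin n → ℝ) → E) (x : Fin n → ℝ) : ℝ≥0∞ :=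
  ⨆ (Q : Cube n) (_ : x ∈ Q.toSet), cubeAvg t Q.toSet h

/-- The `𝒴_t(𝒬)` norm. -/
def Ynorm {n : ℕ} (Qc : Set (Cube n)) (t : ℝ) {E : Type*} [NormedAddCommGroup E]
    (h : (Fin n → ℝ) → E) : ℝ≥0∞ :=
  max (eLpNorm (Set.indicator (shadow Qc)ᶜ h) ⊤ volume)
    (⨆ (L : Cube n) (_ : L ∈ Qc), ⨅ x ∈ (L.dilate 32 (by norm_num)).toSet, maxFn t h x)

/-- Membership in `𝒴_t(𝒬)` (with top cube `Qtop`). -/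
def MemY {n : ℕ} (Qc : Set (Cube n)) (Qtop : Cube n) (t : ℝ) {E : Type*}
    [NormedAddCommGroup E] (h : (Fin n → ℝ) → E) : Prop :=
  MemLp h (ENNReal.ofReal t) volume ∧
    Function.support h ⊆ (Qtop.dilate 3 (by norm_num)).toSet ∧ Ynorm Qc t h < ⊤

/-- Membership in `Ẋ_t(𝒬)`: a function of `𝒴_t(𝒬)` supported on the shadow of `𝒬`
with vanishing mean on every cube of `𝒬`. -/
def MemXdot {n : ℕ} (Qc : Set (Cube n)) (Qtop : Cube n) (t : ℝ)
    (h : (Fin n → ℝ) → ℝ) : Prop :=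
  MemY Qc Qtop t h ∧ Function.support h ⊆ shadow Qc ∧
    ∀ L ∈ Qc, ∫ x in Cube.toSet L, h x = 0

/-!
Since `‖f‖_{𝒴_q} ≤ 1`, every `L ∈ 𝒬` has a point of `32L` where `M_q f < 2`, so
`∫_Q |f|^q ≤ 2^q |Q|` on every cube `Q` through that point. As `|f_{>λ}| ≤ λ^{1-q} |f|^q`,
the averages of `f_{>λ}` over the cubes of `𝒬` are at most `B λ^{1-q}` with `B = 32ⁿ 2^q`,
hence `|b| ≤ λ^{1-q} (|f|^q + B)`, and averaging over the same cubes bounds `‖b‖_{𝒴_1}`.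
For `g`, off the shadow `g = f` is bounded by `1`, and on it `|g| ≤ λ + B`; so `|g| ≤ (1 + B) λ`
almost everywhere, `|g|^p ≤ ((1 + B) λ)^{p-q} |g|^q` with `|g| ≤ |f| + B`, and the same averaging
bounds `‖g‖_{𝒴_p}`.
-/

namespace Cube

variable {n : ℕ}

lemma volume_toSet (Q : Cube n) : volume Q.toSet = ENNReal.ofReal (Q.side ^ n) := by
  have hQ : Q.toSet = Set.univ.pi fun i =>
      Set.Ico (Q.center i - Q.side / 2) (Q.center i + Q.side / 2) := by
    ext x; simp [Cube.toSet]
  simp [hQ, volume_pi_pi, Real.volume_Ico, ENNReal.ofReal_pow Q.side_pos.le]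

lemma volume_toSet_ne_zero (Q : Cube n) : volume Q.toSet ≠ 0 := by
  simpa [volume_toSet] using pow_pos Q.side_pos n

lemma volume_toSet_ne_top (Q : Cube n) : volume Q.toSet ≠ ⊤ := by
  simp [volume_toSet]

lemma volume_dilate (Q : Cube n) {r : ℝ} (hr : 0 < r) :
    volume (Q.dilate r hr).toSet = ENNReal.ofReal (r ^ n) * volume Q.toSet := by
  rw [volume_toSet, volume_toSet, ← ENNReal.ofReal_mul (by positivity), ← mul_pow]
  rfl

lemma toSet_subset_dilate (Q : Cube n) {r : ℝ} (hr : 0 < r) (h1r : 1 ≤ r) :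
    Q.toSet ⊆ (Q.dilate r hr).toSet := by
  intro x hx i
  have hs := Q.side_pos
  have hxi := hx i
  simp only [Cube.dilate]
  constructor <;> nlinarith

end Cube

lemma Real.rpow_add_le_mul_rpow_add_rpow {x y p : ℝ} (hx : 0 ≤ x) (hy : 0 ≤ y) (hp : 1 ≤ p) :
    (x + y) ^ p ≤ 2 ^ (p - 1) * (x ^ p + y ^ p) := by
  lift x to ℝ≥0 using hx
  lift y to ℝ≥0 using hy
  exact_mod_cast NNReal.rpow_add_le_mul_rpow_add_rpow x y hp

lemma Real.rpow_le_rpow_sub_mul_rpow {x M p q : ℝ} (hx : 0 ≤ x) (hxM : x ≤ M) (hq : 0 ≤ q)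
    (hqp : q ≤ p) : x ^ p ≤ M ^ (p - q) * x ^ q := by
  rcases hqp.eq_or_lt with rfl | hqp
  · simp
  calc x ^ p = x ^ (p - q) * x ^ q := by
        rw [← Real.rpow_add' hx (by linarith), sub_add_cancel]
    _ ≤ M ^ (p - q) * x ^ q := by gcongr

section LocalAverages

variable {α E F : Type*} [MeasurableSpace α] [NormedAddCommGroup E] [NormedAddCommGroup F]

lemma coe_nnnorm_rpow (x : E) {s : ℝ} (hs : 0 ≤ s) :
    (‖x‖₊ : ℝ≥0∞) ^ s = ENNReal.ofReal (‖x‖ ^ s) := by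
  rw [← enorm_eq_nnnorm, ← ofReal_norm, ENNReal.ofReal_rpow_of_nonneg (norm_nonneg _) hs]

lemma setLIntegral_rpow_le_of_ae_le {μ : Measure α} {S : Set α} {h : α → E} {f : α → F}
    {s t a c m : ℝ} (hs : 0 ≤ s) (ht : 0 ≤ t) (ha : 0 ≤ a) (hc : 0 ≤ c) (hm : 0 ≤ m)
    (hhf : ∀ᵐ x ∂μ, ‖h x‖ ^ s ≤ a * ‖f x‖ ^ t + c)
    (hf : ∫⁻ x in S, (‖f x‖₊ : ℝ≥0∞) ^ t ∂μ ≤ μ S * ENNReal.ofReal m) :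
    ∫⁻ x in S, (‖h x‖₊ : ℝ≥0∞) ^ s ∂μ ≤ μ S * ENNReal.ofReal (a * m + c) := by
  calc ∫⁻ x in S, (‖h x‖₊ : ℝ≥0∞) ^ s ∂μ
      ≤ ∫⁻ x in S, (ENNReal.ofReal a * (‖f x‖₊ : ℝ≥0∞) ^ t + ENNReal.ofReal c) ∂μ := by
        refine lintegral_mono_ae ((ae_restrict_of_ae hhf).mono fun x hx => ?_)
        rw [coe_nnnorm_rpow _ hs, coe_nnnorm_rpow _ ht, ← ENNReal.ofReal_mul ha,
          ← ENNReal.ofReal_add (by positivity) hc]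
        exact ENNReal.ofReal_le_ofReal hx
    _ = ENNReal.ofReal a * ∫⁻ x in S, (‖f x‖₊ : ℝ≥0∞) ^ t ∂μ + ENNReal.ofReal c * μ S := by
        rw [lintegral_add_right _ measurable_const,
          lintegral_const_mul' _ _ ENNReal.ofReal_ne_top, setLIntegral_const]
    _ ≤ ENNReal.ofReal a * (μ S * ENNReal.ofReal m) + ENNReal.ofReal c * μ S := by gcongr
    _ = μ S * ENNReal.ofReal (a * m + c) := by
        rw [ENNReal.ofReal_add (by positivity) hc, ENNReal.ofReal_mul ha]; ring

end LocalAverages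

section MaximalFunction

variable {n : ℕ} {E F : Type*} [NormedAddCommGroup E] [NormedAddCommGroup F]

lemma cubeAvg_le_of_setLIntegral_le {t : ℝ} (ht : 0 < t) {S : Set (Fin n → ℝ)}
    {f : (Fin n → ℝ) → E} {c : ℝ≥0∞} (hf : ∫⁻ x in S, (‖f x‖₊ : ℝ≥0∞) ^ t ≤ volume S * c) :
    cubeAvg t S f ≤ c ^ (1 / t) := by
  unfold cubeAvg
  gcongr
  calc (volume S)⁻¹ * ∫⁻ x in S, (‖f x‖₊ : ℝ≥0∞) ^ t ≤ (volume S)⁻¹ * (volume S * c) := by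
        gcongr
    _ ≤ c := by rw [← mul_assoc]; exact mul_le_of_le_one_left' (ENNReal.inv_mul_le_one _)

lemma abs_avgI_le_of_setLIntegral_le (Q : Cube n) {g : (Fin n → ℝ) → ℝ} {c : ℝ} (hc : 0 ≤ c)
    (hg : ∫⁻ x in Q.toSet, (‖g x‖₊ : ℝ≥0∞) ≤ volume Q.toSet * ENNReal.ofReal c) :
    |avgI Q g| ≤ c := by
  have hvol : 0 < (volume Q.toSet).toReal :=
    ENNReal.toReal_pos Q.volume_toSet_ne_zero Q.volume_toSet_ne_top
  have hint : ENNReal.ofReal |∫ x in Q.toSet, g x| ≤ volume Q.toSet * ENNReal.ofReal c := by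
    rw [← Real.enorm_eq_ofReal_abs]
    exact (enorm_integral_le_lintegral_enorm g).trans hg
  have hint' := ENNReal.toReal_mono (ENNReal.mul_ne_top Q.volume_toSet_ne_top ENNReal.ofReal_ne_top) hint
  rw [ENNReal.toReal_ofReal (abs_nonneg _), ENNReal.toReal_mul, ENNReal.toReal_ofReal hc] at hint'
  rw [avgI, abs_mul, abs_of_nonneg (inv_nonneg.2 hvol.le), inv_mul_le_iff₀ hvol]
  exact hint'

lemma cubeAvg_le_maxFn {t : ℝ} {f : (Fin n → ℝ) → E} {x : Fin n → ℝ} {Q : Cube n}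
    (hx : x ∈ Q.toSet) : cubeAvg t Q.toSet f ≤ maxFn t f x :=
  le_iSup₂ (f := fun (Q : Cube n) (_ : x ∈ Q.toSet) => cubeAvg t Q.toSet f) Q hx

lemma setLIntegral_rpow_le_of_maxFn_le {t : ℝ} (ht : 0 < t) {f : (Fin n → ℝ) → E}
    {x : Fin n → ℝ} {c : ℝ≥0∞} (hM : maxFn t f x ≤ c) {Q : Cube n} (hx : x ∈ Q.toSet) :
    ∫⁻ y in Q.toSet, (‖f y‖₊ : ℝ≥0∞) ^ t ≤ volume Q.toSet * c ^ t := by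
  have h := ENNReal.rpow_le_rpow ((cubeAvg_le_maxFn hx).trans hM) ht.le
  rwa [cubeAvg, ← ENNReal.rpow_mul, one_div_mul_cancel ht.ne', ENNReal.rpow_one,
    ENNReal.inv_mul_le_iff Q.volume_toSet_ne_zero Q.volume_toSet_ne_top] at h

variable {Qc : Set (Cube n)}

lemma exists_maxFn_lt_of_Ynorm_lt {t : ℝ} {f : (Fin n → ℝ) → E} {c : ℝ≥0∞}
    (hY : Ynorm Qc t f < c) {L : Cube n} (hL : L ∈ Qc) :
    ∃ x ∈ (L.dilate 32 (by norm_num)).toSet, maxFn t f x < c := by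
  have h : ⨅ x ∈ (L.dilate 32 (by norm_num)).toSet, maxFn t f x < c :=
    ((le_iSup₂ (f := fun (L : Cube n) (_ : L ∈ Qc) =>
      ⨅ x ∈ (L.dilate 32 (by norm_num)).toSet, maxFn t f x) L hL).trans
        (le_max_right _ _)).trans_lt hY
  simpa only [iInf_lt_iff, exists_prop] using h

lemma exists_forall_setLIntegral_rpow_le {t : ℝ} (ht : 0 < t) {f : (Fin n → ℝ) → E}
    (hY : Ynorm Qc t f ≤ 1) {L : Cube n} (hL : L ∈ Qc) :
    ∃ x ∈ (L.dilate 32 (by norm_num)).toSet, ∀ Q : Cube n, x ∈ Q.toSet →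
      ∫⁻ y in Q.toSet, (‖f y‖₊ : ℝ≥0∞) ^ t ≤ volume Q.toSet * ENNReal.ofReal (2 ^ t) := by
  obtain ⟨x, hx, hM⟩ := exists_maxFn_lt_of_Ynorm_lt (hY.trans_lt ENNReal.one_lt_two) hL
  refine ⟨x, hx, fun Q hxQ => ?_⟩
  rw [← ENNReal.ofReal_rpow_of_pos two_pos, ENNReal.ofReal_ofNat]
  exact setLIntegral_rpow_le_of_maxFn_le ht hM.le hxQ

lemma ae_norm_le_one_of_Ynorm_le_one {t : ℝ} {f : (Fin n → ℝ) → E} (hY : Ynorm Qc t f ≤ 1) :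
    ∀ᵐ x, x ∉ shadow Qc → ‖f x‖ ≤ 1 := by
  have hoff : eLpNormEssSup ((shadow Qc)ᶜ.indicator f) volume ≤ 1 := by
    rw [← eLpNorm_exponent_top]
    exact (le_max_left _ _).trans hY
  filter_upwards [ae_le_eLpNormEssSup (f := (shadow Qc)ᶜ.indicator f) (μ := volume)]
    with x hx hxQ
  rw [indicator_of_mem hxQ, ← ofReal_norm] at hx
  exact (ENNReal.ofReal_le_one).1 (hx.trans hoff)

lemma Ynorm_le_max_of_ae_rpow_le {s t a c : ℝ} (hs : 0 < s) (ht : 0 < t) (ha : 0 ≤ a)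
    (hc : 0 ≤ c) {f : (Fin n → ℝ) → F} {h : (Fin n → ℝ) → E} (hY : Ynorm Qc t f ≤ 1)
    (hhf : ∀ᵐ x, ‖h x‖ ^ s ≤ a * ‖f x‖ ^ t + c) :
    Ynorm Qc s h ≤ max (eLpNorm ((shadow Qc)ᶜ.indicator h) ⊤ volume)
      (ENNReal.ofReal ((a * 2 ^ t + c) ^ (1 / s))) := by
  refine max_le_max le_rfl (iSup₂_le fun L hL => ?_)
  obtain ⟨x, hx, hf⟩ := exists_forall_setLIntegral_rpow_le ht hY hL
  refine (iInf₂_le x hx).trans (iSup₂_le fun Q hxQ => ?_)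
  rw [← ENNReal.ofReal_rpow_of_nonneg (by positivity) (by positivity)]
  exact cubeAvg_le_of_setLIntegral_le hs
    (setLIntegral_rpow_le_of_ae_le hs.le ht.le ha hc (by positivity) hhf (hf Q hxQ))

end MaximalFunction

def highPart {α : Type*} (lam : ℝ) (f : α → ℝ) (x : α) : ℝ :=
  if lam < |f x| then f x else 0

section HighPart

variable {α : Type*} {lam : ℝ} (f : α → ℝ) (x : α)

lemma abs_highPart_le_rpow {q : ℝ} (hlam : 0 < lam) (hq : 1 ≤ q) :
    |highPart lam f x| ≤ lam ^ (1 - q) * |f x| ^ q := by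
  unfold highPart
  split_ifs with h
  · have hfx : 0 < |f x| := hlam.trans h
    calc |f x| = |f x| ^ (1 - q) * |f x| ^ q := by rw [← Real.rpow_add hfx]; norm_num
      _ ≤ lam ^ (1 - q) * |f x| ^ q := by
          gcongr ?_ * _
          exact Real.rpow_le_rpow_of_nonpos hlam h.le (by linarith)
  · rw [abs_zero]; positivity

lemma abs_sub_highPart_le_min (hlam : 0 ≤ lam) : |f x - highPart lam f x| ≤ min lam |f x| := by
  unfold highPart
  split_ifs with h
  · simpa using hlam
  · simpa using not_lt.1 h

end HighPart

section CalderonZygmund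

variable {n : ℕ} {Qc : Set (Cube n)} {q lam : ℝ} {f : (Fin n → ℝ) → ℝ}

lemma abs_avgI_highPart_le (hq : 1 ≤ q) (hlam : 0 < lam) (hY : Ynorm Qc q f ≤ 1) {L : Cube n}
    (hL : L ∈ Qc) : |avgI L (highPart lam f)| ≤ 32 ^ n * 2 ^ q * lam ^ (1 - q) := by
  have hq0 : 0 < q := by linarith
  obtain ⟨x, hx, hf⟩ := exists_forall_setLIntegral_rpow_le hq0 hY hL
  have hfL : ∫⁻ y in L.toSet, (‖f y‖₊ : ℝ≥0∞) ^ q ≤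
      volume L.toSet * ENNReal.ofReal (32 ^ n * 2 ^ q) :=
    calc ∫⁻ y in L.toSet, (‖f y‖₊ : ℝ≥0∞) ^ q
        ≤ ∫⁻ y in (L.dilate 32 (by norm_num)).toSet, (‖f y‖₊ : ℝ≥0∞) ^ q :=
          lintegral_mono_set (L.toSet_subset_dilate _ (by norm_num))
      _ ≤ volume (L.dilate 32 (by norm_num)).toSet * ENNReal.ofReal (2 ^ q) := hf _ hx
      _ = volume L.toSet * ENNReal.ofReal (32 ^ n * 2 ^ q) := by
          rw [L.volume_dilate, ENNReal.ofReal_mul (by positivity)]; ring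
  have hhigh : ∀ y, ‖highPart lam f y‖ ^ (1 : ℝ) ≤ lam ^ (1 - q) * ‖f y‖ ^ q + 0 := fun y => by
    simpa using abs_highPart_le_rpow f y hlam hq
  have h := setLIntegral_rpow_le_of_ae_le zero_le_one hq0.le (by positivity) le_rfl
    (by positivity) (ae_of_all _ hhigh) hfL
  refine abs_avgI_le_of_setLIntegral_le L (by positivity) ?_
  simpa [mul_comm, mul_left_comm, mul_assoc] using h

def czBad (Qc : Set (Cube n)) (lam : ℝ) (f : (Fin n → ℝ) → ℝ) (x : Fin n → ℝ) : ℝ :=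
  ∑' L : Qc, (L : Cube n).toSet.indicator (fun y => highPart lam f y - avgI L (highPart lam f)) x

lemma czBad_eq_of_mem (hdisj : ∀ L ∈ Qc, ∀ L' ∈ Qc, (L.toSet ∩ L'.toSet).Nonempty → L = L')
    {L : Cube n} (hL : L ∈ Qc) {x : Fin n → ℝ} (hx : x ∈ L.toSet) :
    czBad Qc lam f x = highPart lam f x - avgI L (highPart lam f) := by
  rw [czBad, tsum_eq_single ⟨L, hL⟩ fun L' hL' => indicator_of_notMem (fun hxL' =>
    hL' (Subtype.ext (hdisj _ L'.2 _ hL ⟨x, hxL', hx⟩))) _]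
  exact indicator_of_mem hx _

lemma czBad_of_notMem_shadow {x : Fin n → ℝ} (hx : x ∉ shadow Qc) : czBad Qc lam f x = 0 := by
  refine (tsum_congr fun L => indicator_of_notMem (fun hxL => hx ?_) _).trans tsum_zero
  exact mem_biUnion L.2 hxL

lemma abs_czBad_le (hdisj : ∀ L ∈ Qc, ∀ L' ∈ Qc, (L.toSet ∩ L'.toSet).Nonempty → L = L')
    (hq : 1 ≤ q) (hlam : 0 < lam) (hY : Ynorm Qc q f ≤ 1) (x : Fin n → ℝ) :
    |czBad Qc lam f x| ≤ lam ^ (1 - q) * |f x| ^ q + 32 ^ n * 2 ^ q * lam ^ (1 - q) := by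
  by_cases hx : x ∈ shadow Qc
  · obtain ⟨L, hL, hxL⟩ := mem_iUnion₂.1 hx
    rw [czBad_eq_of_mem hdisj hL hxL]
    exact (abs_sub _ _).trans
      (add_le_add (abs_highPart_le_rpow f x hlam hq) (abs_avgI_highPart_le hq hlam hY hL))
  · rw [czBad_of_notMem_shadow hx, abs_zero]
    positivity

lemma abs_sub_czBad_le_of_mem_shadow
    (hdisj : ∀ L ∈ Qc, ∀ L' ∈ Qc, (L.toSet ∩ L'.toSet).Nonempty → L = L')
    (hq : 1 ≤ q) (hlam : 0 < lam) (hY : Ynorm Qc q f ≤ 1) {x : Fin n → ℝ} (hx : x ∈ shadow Qc) :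
    |f x - czBad Qc lam f x| ≤ min lam |f x| + 32 ^ n * 2 ^ q * lam ^ (1 - q) := by
  obtain ⟨L, hL, hxL⟩ := mem_iUnion₂.1 hx
  rw [czBad_eq_of_mem hdisj hL hxL, sub_sub_eq_add_sub, add_sub_right_comm]
  exact (abs_add_le _ _).trans
    (add_le_add (abs_sub_highPart_le_min f x hlam.le) (abs_avgI_highPart_le hq hlam hY hL))

lemma abs_sub_czBad_le
    (hdisj : ∀ L ∈ Qc, ∀ L' ∈ Qc, (L.toSet ∩ L'.toSet).Nonempty → L = L')
    (hq : 1 ≤ q) (hlam : 0 < lam) (hY : Ynorm Qc q f ≤ 1) (x : Fin n → ℝ) :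
    |f x - czBad Qc lam f x| ≤ |f x| + 32 ^ n * 2 ^ q * lam ^ (1 - q) := by
  by_cases hx : x ∈ shadow Qc
  · exact (abs_sub_czBad_le_of_mem_shadow hdisj hq hlam hY hx).trans
      (add_le_add_left (min_le_right _ _) _)
  · rw [czBad_of_notMem_shadow hx, sub_zero]
    exact le_add_of_nonneg_right (by positivity)

lemma ae_abs_sub_czBad_le
    (hdisj : ∀ L ∈ Qc, ∀ L' ∈ Qc, (L.toSet ∩ L'.toSet).Nonempty → L = L')
    (hq : 1 ≤ q) (hlam : 1 < lam) (hY : Ynorm Qc q f ≤ 1) :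
    ∀ᵐ x, |f x - czBad Qc lam f x| ≤ (1 + 32 ^ n * 2 ^ q) * lam := by
  have hpow : lam ^ (1 - q) ≤ 1 := Real.rpow_le_one_of_one_le_of_nonpos hlam.le (by linarith)
  have hB : (0 : ℝ) ≤ 32 ^ n * 2 ^ q := by positivity
  filter_upwards [ae_norm_le_one_of_Ynorm_le_one hY] with x hx
  by_cases hxs : x ∈ shadow Qc
  · have h := abs_sub_czBad_le_of_mem_shadow hdisj hq (zero_lt_one.trans hlam) hY hxs
    have := min_le_left lam |f x|
    nlinarith
  · rw [czBad_of_notMem_shadow hxs, sub_zero, ← Real.norm_eq_abs]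
    nlinarith [hx hxs]

lemma Ynorm_czBad_le (hdisj : ∀ L ∈ Qc, ∀ L' ∈ Qc, (L.toSet ∩ L'.toSet).Nonempty → L = L')
    (hq : 1 ≤ q) (hlam : 0 < lam) (hY : Ynorm Qc q f ≤ 1) :
    Ynorm Qc 1 (czBad Qc lam f) ≤ ENNReal.ofReal ((1 + 32 ^ n) * 2 ^ q * lam ^ (1 - q)) := by
  have hoff : (shadow Qc)ᶜ.indicator (czBad Qc lam f) = 0 := by
    ext x
    by_cases hx : x ∈ shadow Qc
    · simp [hx]
    · simp [hx, czBad_of_notMem_shadow hx]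
  have h := Ynorm_le_max_of_ae_rpow_le (h := czBad Qc lam f) (a := lam ^ (1 - q))
    (c := 32 ^ n * 2 ^ q * lam ^ (1 - q)) one_pos (by linarith) (by positivity) (by positivity) hY
    (ae_of_all _ fun x => by simpa using abs_czBad_le hdisj hq hlam hY x)
  rw [hoff, eLpNorm_zero, max_eq_right zero_le] at h
  refine h.trans_eq (congrArg ENNReal.ofReal ?_)
  norm_num
  ring

/-- With `B = 32 ^ n * 2 ^ q`, this comes from `|g| ≤ (1 + B) λ` a.e. and `|g| ≤ |f| + B`, through
`|g| ^ p ≤ ((1 + B) λ) ^ (p - q) * 2 ^ (q - 1) * (|f| ^ q + B ^ q)`. -/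
def czGoodConst (n : ℕ) (q p : ℝ) : ℝ :=
  (1 + 32 ^ n * 2 ^ q) ^ (1 - q / p) * (2 ^ (q - 1) * (2 ^ q + (32 ^ n * 2 ^ q) ^ q)) ^ (1 / p)

lemma Ynorm_sub_czBad_le
    (hdisj : ∀ L ∈ Qc, ∀ L' ∈ Qc, (L.toSet ∩ L'.toSet).Nonempty → L = L')
    (hq : 1 ≤ q) {p : ℝ} (hqp : q ≤ p) (hlam : 1 < lam) (hY : Ynorm Qc q f ≤ 1) :
    Ynorm Qc p (fun x => f x - czBad Qc lam f x) ≤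
      max 1 (ENNReal.ofReal (czGoodConst n q p * lam ^ (1 - q / p))) := by
  have hlam0 : 0 < lam := by linarith
  have hp : 0 < p := by linarith
  set B : ℝ := 32 ^ n * 2 ^ q with hB
  have hB0 : 0 ≤ B := by positivity
  set a : ℝ := ((1 + B) * lam) ^ (p - q) * 2 ^ (q - 1) with ha
  have hpoint : ∀ᵐ x, ‖f x - czBad Qc lam f x‖ ^ p ≤ a * ‖f x‖ ^ q + a * B ^ q := by
    filter_upwards [ae_abs_sub_czBad_le hdisj hq hlam hY] with x hx
    have hpow : lam ^ (1 - q) ≤ 1 := Real.rpow_le_one_of_one_le_of_nonpos hlam.le (by linarith)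
    have hle : |f x - czBad Qc lam f x| ≤ |f x| + B :=
      (abs_sub_czBad_le hdisj hq hlam0 hY x).trans (by gcongr; nlinarith)
    simp only [Real.norm_eq_abs]
    calc |f x - czBad Qc lam f x| ^ p
        ≤ ((1 + B) * lam) ^ (p - q) * |f x - czBad Qc lam f x| ^ q :=
          Real.rpow_le_rpow_sub_mul_rpow (abs_nonneg _) hx (by linarith) hqp
      _ ≤ ((1 + B) * lam) ^ (p - q) * (|f x| + B) ^ q := by gcongr
      _ ≤ ((1 + B) * lam) ^ (p - q) * (2 ^ (q - 1) * (|f x| ^ q + B ^ q)) := by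
          gcongr
          exact Real.rpow_add_le_mul_rpow_add_rpow (abs_nonneg _) hB0 hq
      _ = a * |f x| ^ q + a * B ^ q := by rw [ha]; ring
  have hoff : (shadow Qc)ᶜ.indicator (fun x => f x - czBad Qc lam f x) =
      (shadow Qc)ᶜ.indicator f :=
    indicator_congr fun x hx => by rw [czBad_of_notMem_shadow hx, sub_zero]
  have h := Ynorm_le_max_of_ae_rpow_le (h := fun x => f x - czBad Qc lam f x) (a := a)
    (c := a * B ^ q) hp (by linarith) (by positivity) (by positivity) hY hpoint
  rw [hoff] at h
  refine h.trans (max_le_max ((le_max_left _ _).trans hY) (le_of_eq (congrArg ENNReal.ofReal ?_)))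
  calc (a * 2 ^ q + a * B ^ q) ^ (1 / p)
      = (((1 + B) * lam) ^ (p - q) * (2 ^ (q - 1) * (2 ^ q + B ^ q))) ^ (1 / p) := by
        rw [ha]; ring_nf
    _ = czGoodConst n q p * lam ^ (1 - q / p) := by
        have hexp : (p - q) * (1 / p) = 1 - q / p := by field_simp
        rw [Real.mul_rpow (by positivity) (by positivity), ← Real.rpow_mul (by positivity), hexp,
          Real.mul_rpow (by positivity) hlam0.le, czGoodConst]
        ring

end CalderonZygmund

theorem cz_splitting_Xdot_general
    (n : ℕ) (q p : ℝ) (hq : 1 ≤ q) (hqp : q ≤ p) :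
    ∃ C : ℝ, 0 < C ∧
      ∀ (D : Set (Cube n)) (Qtop : Cube n) (Qc : Set (Cube n)),
        IsDyadicLattice D → IsStoppingCollection D Qtop Qc →
      ∀ lam : ℝ, 1 < lam →
      ∀ f : (Fin n → ℝ) → ℝ, MemXdot Qc Qtop q f → Ynorm Qc q f ≤ 1 →
      ∀ b g : (Fin n → ℝ) → ℝ,
        (b = fun x => ∑' L : Qc,
          Set.indicator (Cube.toSet (L : Cube n))
            (fun y => (if lam < |f y| then f y else 0) -
              (volume (Cube.toSet (L : Cube n))).toReal⁻¹ *
                ∫ z in Cube.toSet (L : Cube n), (if lam < |f z| then f z else 0)) x) →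
        (g = fun x => f x - b x) →
        Ynorm Qc 1 b ≤ ENNReal.ofReal (C * lam ^ (1 - q)) ∧
          Ynorm Qc p g ≤ ENNReal.ofReal (C * lam ^ (1 - q / p)) := by
  have hbad : 0 ≤ (1 + 32 ^ n : ℝ) * 2 ^ q := by positivity
  have hgood : 0 ≤ czGoodConst n q p := by unfold czGoodConst; positivity
  refine ⟨(1 + 32 ^ n) * 2 ^ q + czGoodConst n q p + 1, by positivity, ?_⟩
  rintro D Qtop Qc - hS lam hlam f - hY b g rfl rfl
  have hdisj := hS.2.2.1
  constructor
  · refine (Ynorm_czBad_le hdisj hq (by linarith) hY).trans (ENNReal.ofReal_le_ofReal ?_)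
    gcongr
    linarith
  · have hpow : 1 ≤ lam ^ (1 - q / p) :=
      Real.one_le_rpow hlam.le (sub_nonneg.2 ((div_le_one (by linarith)).2 hqp))
    refine (Ynorm_sub_czBad_le hdisj hq hqp hlam hY).trans (max_le ?_ ?_)
    · exact ENNReal.one_le_ofReal.2 (one_le_mul_of_one_le_of_one_le (by linarith) hpow)
    · exact ENNReal.ofReal_le_ofReal (by gcongr; linarith)

/-- Calderón–Zygmund splitting in the localized spaces: if `f ∈ Ẋ_q(𝒬)` with
`‖f‖_{Ẋ_q} ≤ 1` and `b = ∑_L (f_{>λ} - ⨍_L f_{>λ}) 1_L`, `g = f - b`, then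
`‖b‖_{Ẋ₁} ≲ λ^{1-q}` and `‖g‖_{𝒴_p} ≲ λ^{1-q/p}`. -/
theorem cz_splitting_Xdot
    (n : ℕ) (hn : 1 ≤ n) (q p : ℝ) (hq : 1 ≤ q) (hqp : q ≤ p) :
    ∃ C : ℝ, 0 < C ∧
      ∀ (D : Set (Cube n)) (Qtop : Cube n) (Qc : Set (Cube n)),
        IsDyadicLattice D → IsStoppingCollection D Qtop Qc →
      ∀ lam : ℝ, 1 < lam →
      ∀ f : (Fin n → ℝ) → ℝ, MemXdot Qc Qtop q f → Ynorm Qc q f ≤ 1 →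
      ∀ b g : (Fin n → ℝ) → ℝ,
        (b = fun x => ∑' L : Qc,
          Set.indicator (Cube.toSet (L : Cube n))
            (fun y => (if lam < |f y| then f y else 0) -
              (volume (Cube.toSet (L : Cube n))).toReal⁻¹ *
                ∫ z in Cube.toSet (L : Cube n), (if lam < |f z| then f z else 0)) x) →
        (g = fun x => f x - b x) →
        Ynorm Qc 1 b ≤ ENNReal.ofReal (C * lam ^ (1 - q)) ∧
          Ynorm Qc p g ≤ ENNReal.ofReal (C * lam ^ (1 - q / p)) :=
  cz_splitting_Xdot_general n q p hq hqp
end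
end

section
/- Let 𝒬 be a stopping collection with top Q in a dyadic lattice of ℝ^n, let 1 ≤ q ≤ p < ∞ and λ > 1. If f ∈ 𝒴_q(𝒬) with ‖f‖_{𝒴_q} ≤ 1, then ‖f·1_{|f|>λ}‖_{𝒴_1(𝒬)} ≲ λ^{1−q} and ‖f·1_{|f|≤λ}‖_{𝒴_p(𝒬)} ≲ λ^{1−q/p}, with implicit constants depending only on n, q, p. -/
open MeasureTheory Filter Set
open scoped ENNReal NNReal BigOperators FourierTransform

noncomputable section

/-! Both truncations are dominated pointwise by a power of `|f|`:
`|f|·1_{|f|>λ} ≤ λ^{1-q} |f|^q` and `(|f|·1_{|f|≤λ})^p ≤ λ^{p-q} |f|^q`. Averaging over cubes turns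
these into `M₁(f·1_{|f|>λ}) ≤ λ^{1-q} (M_q f)^q` and `M_p(f·1_{|f|≤λ}) ≤ λ^{1-q/p} (M_q f)^{q/p}`,
and as `u ↦ c·u^r` is increasing and continuous it commutes with the infimum over `L̂`, so the
bound `‖f‖_{𝒴_q} ≤ 1` passes through with constant `1`. Off the shadow `|f| ≤ 1 < λ` a.e., so there
the large part vanishes and the small part is dominated by `f`. -/

section Truncation

variable {lam q p r : ℝ}

lemma abs_ite_lt_abs_le (hlam : 0 < lam) (hq : 1 ≤ q) :
    |if lam < |r| then r else 0| ≤ lam ^ (1 - q) * |r| ^ q := by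
  split_ifs with h
  · calc |r| = |r| ^ (1 - q) * |r| ^ q := by
          rw [← Real.rpow_add (hlam.trans h), sub_add_cancel, Real.rpow_one]
      _ ≤ lam ^ (1 - q) * |r| ^ q := by
          gcongr ?_ * _
          exact Real.rpow_le_rpow_of_nonpos hlam h.le (by linarith)
  · simp only [abs_zero]
    positivity

lemma abs_ite_abs_le_rpow_le (hlam : 0 < lam) (hq : 0 < q) (hqp : q ≤ p) :
    |if |r| ≤ lam then r else 0| ^ p ≤ (lam ^ (1 - q / p)) ^ p * |r| ^ q := by
  have hp : 0 < p := hq.trans_le hqp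
  rw [← Real.rpow_mul hlam.le, sub_mul, one_mul, div_mul_cancel₀ q hp.ne']
  split_ifs with h
  · calc |r| ^ p = |r| ^ (p - q) * |r| ^ q := by
          rw [← Real.rpow_add' (abs_nonneg r) (by linarith), sub_add_cancel]
      _ ≤ lam ^ (p - q) * |r| ^ q := by
          gcongr
  · rw [abs_zero, Real.zero_rpow hp.ne']
    positivity

lemma enorm_ite_lt_abs_le (hlam : 0 < lam) (hq : 1 ≤ q) :
    ‖if lam < |r| then r else 0‖ₑ ≤ ENNReal.ofReal (lam ^ (1 - q)) * ‖r‖ₑ ^ q := by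
  rw [Real.enorm_eq_ofReal_abs, Real.enorm_eq_ofReal_abs,
    ENNReal.ofReal_rpow_of_nonneg (abs_nonneg r) (by linarith),
    ← ENNReal.ofReal_mul (by positivity)]
  exact ENNReal.ofReal_le_ofReal (abs_ite_lt_abs_le hlam hq)

lemma enorm_ite_abs_le_rpow_le (hlam : 0 < lam) (hq : 0 < q) (hqp : q ≤ p) :
    ‖if |r| ≤ lam then r else 0‖ₑ ^ p ≤ ENNReal.ofReal (lam ^ (1 - q / p)) ^ p * ‖r‖ₑ ^ q := by
  have hp : 0 ≤ p := by linarith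
  rw [Real.enorm_eq_ofReal_abs, Real.enorm_eq_ofReal_abs,
    ENNReal.ofReal_rpow_of_nonneg (abs_nonneg _) hp,
    ENNReal.ofReal_rpow_of_nonneg (by positivity) hp,
    ENNReal.ofReal_rpow_of_nonneg (abs_nonneg r) hq.le, ← ENNReal.ofReal_mul (by positivity)]
  exact ENNReal.ofReal_le_ofReal (abs_ite_abs_le_rpow_le hlam hq hqp)

lemma eLpNorm_indicator_ite_lt_abs_eq_zero {α : Type*} [MeasurableSpace α] {μ : Measure α}
    {S : Set α} {f : α → ℝ} (hlam : 1 ≤ lam) (hf : eLpNorm (S.indicator f) ⊤ μ ≤ 1) :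
    eLpNorm (S.indicator fun x => if lam < |f x| then f x else 0) ⊤ μ = 0 := by
  rw [eLpNorm_exponent_top] at hf
  refine (eLpNorm_congr_ae ?_).trans eLpNorm_zero
  filter_upwards [ae_le_eLpNormEssSup (f := S.indicator f) (μ := μ)] with x hx
  by_cases hxS : x ∈ S
  · have hfx : |f x| ≤ 1 := by
      have := hx.trans hf
      rwa [indicator_of_mem hxS, Real.enorm_eq_ofReal_abs, ENNReal.ofReal_le_one] at this
    simp [hxS, not_lt.2 (hfx.trans hlam)]
  · simp [hxS]

lemma eLpNorm_indicator_ite_abs_le_le {α : Type*} [MeasurableSpace α] {μ : Measure α}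
    {S : Set α} {f : α → ℝ} {P : ℝ≥0∞} :
    eLpNorm (S.indicator fun x => if |f x| ≤ lam then f x else 0) P μ ≤
      eLpNorm (S.indicator f) P μ :=
  eLpNorm_mono fun x => by
    by_cases hxS : x ∈ S
    · simp only [indicator_of_mem hxS]
      split_ifs <;> simp
    · simp [hxS]

end Truncation

lemma ENNReal.mul_rpow_iInf₂ {ι : Sort*} {κ : ι → Sort*} (u : (i : ι) → κ i → ℝ≥0∞)
    {c : ℝ≥0∞} (hc₀ : c ≠ 0) (hc : c ≠ ⊤) {r : ℝ} (hr : 0 < r) :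
    c * (⨅ (i) (j), u i j) ^ r = ⨅ (i) (j), c * u i j ^ r := by
  set φ : ℝ≥0∞ → ℝ≥0∞ := fun a => c * a ^ r
  have hφ : Monotone φ := fun a b hab => mul_le_mul_right (ENNReal.rpow_le_rpow hab hr.le) c
  have hφc : Continuous φ := (ENNReal.continuous_const_mul hc).comp ENNReal.continuous_rpow_const
  have hφtop : φ ⊤ = ⊤ := by simp only [φ, ENNReal.top_rpow_of_pos hr, ENNReal.mul_top hc₀]
  change φ _ = ⨅ (i) (j), φ (u i j)
  rw [hφ.map_iInf_of_continuousAt hφc.continuousAt hφtop]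
  exact iInf_congr fun i => hφ.map_iInf_of_continuousAt hφc.continuousAt hφtop

section Averages

variable {n : ℕ} {E F : Type*} [NormedAddCommGroup E] [NormedAddCommGroup F]
  {s t : ℝ} {c : ℝ≥0∞} {f : (Fin n → ℝ) → E} {g : (Fin n → ℝ) → F}

lemma cubeAvg_le_mul_rpow (hs : 0 < s) (ht : 0 < t) (hc : c ≠ ⊤)
    (h : ∀ x, ‖g x‖ₑ ^ t ≤ c ^ t * ‖f x‖ₑ ^ s) (S : Set (Fin n → ℝ)) :
    cubeAvg t S g ≤ c * cubeAvg s S f ^ (s / t) := by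
  unfold cubeAvg
  rw [← ENNReal.rpow_mul, show 1 / s * (s / t) = 1 / t by field_simp]
  have hint : ∫⁻ x in S, ‖g x‖ₑ ^ t ≤ c ^ t * ∫⁻ x in S, ‖f x‖ₑ ^ s := by
    rw [← lintegral_const_mul' _ _ (ENNReal.rpow_ne_top_of_nonneg ht.le hc)]
    exact lintegral_mono h
  calc ((volume S)⁻¹ * ∫⁻ x in S, ‖g x‖ₑ ^ t) ^ (1 / t)
      ≤ (c ^ t * ((volume S)⁻¹ * ∫⁻ x in S, ‖f x‖ₑ ^ s)) ^ (1 / t) := by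
        rw [mul_left_comm]
        gcongr
    _ = c * ((volume S)⁻¹ * ∫⁻ x in S, ‖f x‖ₑ ^ s) ^ (1 / t) := by
        rw [ENNReal.mul_rpow_of_nonneg _ _ (by positivity), ← ENNReal.rpow_mul,
          mul_one_div_cancel ht.ne', ENNReal.rpow_one]

lemma maxFn_le_mul_rpow (hs : 0 < s) (ht : 0 < t) (hc : c ≠ ⊤)
    (h : ∀ x, ‖g x‖ₑ ^ t ≤ c ^ t * ‖f x‖ₑ ^ s) (x : Fin n → ℝ) :
    maxFn t g x ≤ c * maxFn s f x ^ (s / t) :=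
  iSup₂_le fun Q hx => (cubeAvg_le_mul_rpow hs ht hc h Q.toSet).trans <| by
    gcongr
    exact le_iSup₂ (f := fun (Q : Cube n) (_ : x ∈ Q.toSet) => cubeAvg s Q.toSet f) Q hx

lemma Ynorm_le_of_maxFn_le {Qc : Set (Cube n)} {r : ℝ} (hr : 0 < r) (hc₀ : c ≠ 0) (hc : c ≠ ⊤)
    (hoff : eLpNorm ((shadow Qc)ᶜ.indicator g) ⊤ volume ≤ c)
    (hM : ∀ x, maxFn t g x ≤ c * maxFn s f x ^ r) (hf : Ynorm Qc s f ≤ 1) :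
    Ynorm Qc t g ≤ c := by
  refine max_le hoff (iSup₂_le fun L hL => ?_)
  have hL : ⨅ x ∈ (L.dilate 32 (by norm_num)).toSet, maxFn s f x ≤ 1 :=
    (le_iSup₂ (f := fun L (_ : L ∈ Qc) =>
      ⨅ x ∈ (L.dilate 32 (by norm_num)).toSet, maxFn s f x) L hL).trans
      ((le_max_right _ _).trans hf)
  calc ⨅ x ∈ (L.dilate 32 (by norm_num)).toSet, maxFn t g x
      ≤ ⨅ x ∈ (L.dilate 32 (by norm_num)).toSet, c * maxFn s f x ^ r :=
        iInf₂_mono fun x _ => hM x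
    _ = c * (⨅ x ∈ (L.dilate 32 (by norm_num)).toSet, maxFn s f x) ^ r :=
        (ENNReal.mul_rpow_iInf₂ _ hc₀ hc hr).symm
    _ ≤ c := by
        grw [hL, ENNReal.one_rpow, mul_one]

end Averages

theorem truncation_Ynorm_estimates_general
    (n : ℕ) (q p : ℝ) (hq : 1 ≤ q) (hqp : q ≤ p) :
    ∃ C : ℝ, 0 < C ∧
      ∀ (D : Set (Cube n)) (Qtop : Cube n) (Qc : Set (Cube n)),
        IsDyadicLattice D → IsStoppingCollection D Qtop Qc →
      ∀ lam : ℝ, 1 < lam →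
      ∀ f : (Fin n → ℝ) → ℝ, MemY Qc Qtop q f → Ynorm Qc q f ≤ 1 →
        Ynorm Qc 1 (fun x => if lam < |f x| then f x else 0) ≤
            ENNReal.ofReal (C * lam ^ (1 - q)) ∧
          Ynorm Qc p (fun x => if |f x| ≤ lam then f x else 0) ≤
            ENNReal.ofReal (C * lam ^ (1 - q / p)) := by
  refine ⟨1, one_pos, fun D Qtop Qc _ _ lam hlam f _ hf => ?_⟩
  have hlam₀ : 0 < lam := by linarith
  have hq₀ : 0 < q := by linarith
  have hp₀ : 0 < p := by linarith
  have hoff : eLpNorm ((shadow Qc)ᶜ.indicator f) ⊤ volume ≤ 1 := (le_max_left _ _).trans hf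
  simp only [one_mul]
  constructor
  · refine Ynorm_le_of_maxFn_le hq₀ (by positivity) ENNReal.ofReal_ne_top ?_ (fun x => ?_) hf
    · rw [eLpNorm_indicator_ite_lt_abs_eq_zero hlam.le hoff]
      exact zero_le
    · simpa only [div_one] using maxFn_le_mul_rpow hq₀ one_pos ENNReal.ofReal_ne_top
        (fun y => by simpa only [ENNReal.rpow_one] using enorm_ite_lt_abs_le hlam₀ hq) x
  · refine Ynorm_le_of_maxFn_le (div_pos hq₀ hp₀) (by positivity) ENNReal.ofReal_ne_top ?_
      (maxFn_le_mul_rpow hq₀ hp₀ ENNReal.ofReal_ne_top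
        (fun y => enorm_ite_abs_le_rpow_le hlam₀ hq₀ hqp)) hf
    refine eLpNorm_indicator_ite_abs_le_le.trans (hoff.trans (ENNReal.one_le_ofReal.2 ?_))
    exact Real.one_le_rpow hlam.le (sub_nonneg.2 ((div_le_one hp₀).2 hqp))

/-- Truncation estimates in the localized spaces: if `f ∈ 𝒴_q(𝒬)` with `‖f‖_{𝒴_q} ≤ 1`,
then `‖f·1_{|f|>λ}‖_{𝒴₁} ≲ λ^{1-q}` and `‖f·1_{|f|≤λ}‖_{𝒴_p} ≲ λ^{1-q/p}`. -/
theorem truncation_Ynorm_estimates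
    (n : ℕ) (hn : 1 ≤ n) (q p : ℝ) (hq : 1 ≤ q) (hqp : q ≤ p) :
    ∃ C : ℝ, 0 < C ∧
      ∀ (D : Set (Cube n)) (Qtop : Cube n) (Qc : Set (Cube n)),
        IsDyadicLattice D → IsStoppingCollection D Qtop Qc →
      ∀ lam : ℝ, 1 < lam →
      ∀ f : (Fin n → ℝ) → ℝ, MemY Qc Qtop q f → Ynorm Qc q f ≤ 1 →
        Ynorm Qc 1 (fun x => if lam < |f x| then f x else 0) ≤
            ENNReal.ofReal (C * lam ^ (1 - q)) ∧
          Ynorm Qc p (fun x => if |f x| ≤ lam then f x else 0) ≤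
            ENNReal.ofReal (C * lam ^ (1 - q / p)) :=
  truncation_Ynorm_estimates_general n q p hq hqp
end
end
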